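/- arXiv:2412.07410 — 4 statements merged into one kernel-verified Lean document; each statement's English description precedes it below -/
import Mathlib

section
/- Let V_1, …, V_m ∈ M_n satisfy Tr(ρ^{-1} V_r* V_q) = δ² δ_{rq} for all r, q, where ρ is a positive invertible matrix with Tr(ρ^{-1}) = δ². Then the completely positive map A(x) = Σ_r V_r x V_r* on M_n satisfies the Schur-idempotence relation m(A ⊗ A)m* = δ² A, i.e. A is a quantum adjacency operator for the δ-form ψ = Tr(ρ ·). -/
open scoped TensorProduct ComplexOrder
open Matrix

/-- The state `ψ = Tr(ρ ·)` on `M_n` as a linear functional. -/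
noncomputable def psi1 {n : ℕ} (ρ : Matrix (Fin n) (Fin n) ℂ) :
    Matrix (Fin n) (Fin n) ℂ →ₗ[ℂ] ℂ where
  toFun X := (ρ * X).trace
  map_add' x y := by simp [mul_add]
  map_smul' c x := by simp [mul_smul_comm]

/-- The GNS inner product on `M_n ⊗ M_n` paired against the pure tensor `x ⊗ y` in the first
(conjugated) slot. -/
noncomputable def pair1 {n : ℕ} (ρ x y : Matrix (Fin n) (Fin n) ℂ) :
    (Matrix (Fin n) (Fin n) ℂ ⊗[ℂ] Matrix (Fin n) (Fin n) ℂ) →ₗ[ℂ] ℂ :=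
  TensorProduct.lift
    (LinearMap.mk₂ ℂ (fun c e => psi1 ρ (star x * c) * psi1 ρ (star y * e))
      (fun c c' e => by simp [mul_add, map_add, add_mul])
      (fun s c e => by simp [mul_smul_comm, _root_.map_smul, smul_eq_mul]; ring)
      (fun c e e' => by simp [mul_add, map_add])
      (fun s c e => by simp [mul_smul_comm, _root_.map_smul, smul_eq_mul]; ring))

/-- The completely positive map `A(x) = Σ_r V_r x V_r*` as a linear map on `M_n`. -/
noncomputable def krausMap {n m : ℕ} (V : Fin m → Matrix (Fin n) (Fin n) ℂ) :
    Matrix (Fin n) (Fin n) ℂ →ₗ[ℂ] Matrix (Fin n) (Fin n) ℂ where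
  toFun x := ∑ r, V r * x * (V r)ᴴ
  map_add' x y := by simp [mul_add, add_mul, Finset.sum_add_distrib]
  map_smul' c x := by simp [mul_smul_comm, smul_mul_assoc, Finset.smul_sum]

/-!
Both sides of `m(A ⊗ A)m* = δ² A` are linear, so it suffices to check them on the matrix units
`e_ij`. The defining property of `m*` pins it down on pure tensors, because the functionals
`pair1 ρ (e_ab ρ⁻¹) (e_cd ρ⁻¹)` are the coordinate functionals of the standard basis of
`M_n ⊗ M_n`; this gives `m*(e_ij) = Σ_k e_ik ρ⁻¹ ⊗ e_kj`. Then
`m(A ⊗ A)m*(e_ij) = Σ_{r,q} V_r (Σ_k e_ik ρ⁻¹ V_r* V_q e_kj) V_q*`, and the inner sum is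
`Tr(ρ⁻¹ V_r* V_q) e_ij = δ² δ_rq e_ij`.
-/

theorem Matrix.sum_single_mul_mul_single {ι R : Type*} [Fintype ι] [DecidableEq ι] [Semiring R]
    (M : Matrix ι ι R) (i j : ι) :
    ∑ k, single i k 1 * M * single k j 1 = single i j M.trace := by
  simp only [single_mul_mul_single, one_mul, mul_one, trace, diag]
  exact (map_sum (singleAddMonoidHom (α := R) i j) _ _).symm

section
variable {n : ℕ} {ρ : Matrix (Fin n) (Fin n) ℂ}

theorem pair1_tmul (x y c e : Matrix (Fin n) (Fin n) ℂ) :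
    pair1 ρ x y (c ⊗ₜ[ℂ] e) = psi1 ρ (star x * c) * psi1 ρ (star y * e) :=
  rfl

theorem psi1_mul_inv (hdet : IsUnit ρ.det) (X : Matrix (Fin n) (Fin n) ℂ) :
    psi1 ρ (X * ρ⁻¹) = X.trace := by
  rw [psi1, LinearMap.coe_mk, AddHom.coe_mk, ← mul_assoc, trace_mul_cycle, nonsing_inv_mul ρ hdet,
    one_mul]

theorem psi1_star_single_mul_inv_mul (hρ : ρ.IsHermitian) (hdet : IsUnit ρ.det) (a b : Fin n)
    (X : Matrix (Fin n) (Fin n) ℂ) :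
    psi1 ρ (star (single a b 1 * ρ⁻¹) * X) = X a b := by
  rw [psi1, LinearMap.coe_mk, AddHom.coe_mk, star_eq_conjTranspose, conjTranspose_mul,
    hρ.inv.eq, ← mul_assoc, ← mul_assoc, mul_nonsing_inv ρ hdet, one_mul, conjTranspose_single,
    star_one, trace_single_mul, one_smul]

theorem eq_of_forall_pair1_eq (hρ : ρ.IsHermitian) (hdet : IsUnit ρ.det)
    {t t' : Matrix (Fin n) (Fin n) ℂ ⊗[ℂ] Matrix (Fin n) (Fin n) ℂ}
    (h : ∀ x y, pair1 ρ x y t = pair1 ρ x y t') : t = t' := by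
  set B := (stdBasis ℂ (Fin n) (Fin n)).tensorProduct (stdBasis ℂ (Fin n) (Fin n))
  have hcoord : ∀ a b c d : Fin n,
      B.coord ((a, b), (c, d)) = pair1 ρ (single a b 1 * ρ⁻¹) (single c d 1 * ρ⁻¹) :=
    fun a b c d => TensorProduct.ext' fun X Y => by
      rw [pair1_tmul, psi1_star_single_mul_inv_mul hρ hdet, psi1_star_single_mul_inv_mul hρ hdet]
      simp [B, stdBasis, mul_comm]
  refine B.ext_elem fun ⟨⟨a, b⟩, ⟨c, d⟩⟩ => ?_
  simp only [← B.coord_apply, hcoord, h]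

theorem sum_pair1_single_mul_inv_tmul_single (hdet : IsUnit ρ.det) (x y : Matrix (Fin n) (Fin n) ℂ)
    (i j : Fin n) :
    ∑ k, pair1 ρ x y ((single i k 1 * ρ⁻¹) ⊗ₜ[ℂ] single k j 1) =
      psi1 ρ (star (x * y) * single i j 1) := by
  have hcol : ∑ k, star x k i • single k j 1 = star x * single i j 1 := by
    ext a b
    by_cases hj : j = b <;> simp [mul_apply, single, Matrix.sum_apply, hj]
  simp only [pair1_tmul, ← mul_assoc, psi1_mul_inv hdet, trace_mul_single]
  rw [star_mul, mul_assoc, ← hcol, Finset.mul_sum, map_sum]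
  simp only [mul_smul_comm, map_smul, smul_eq_mul, MulOpposite.op_one, one_smul]

theorem mstar_single (hρ : ρ.IsHermitian) (hdet : IsUnit ρ.det)
    {mstar : Matrix (Fin n) (Fin n) ℂ →ₗ[ℂ] Matrix (Fin n) (Fin n) ℂ ⊗[ℂ] Matrix (Fin n) (Fin n) ℂ}
    (hmstar : ∀ x y z, psi1 ρ (star (x * y) * z) = pair1 ρ x y (mstar z)) (i j : Fin n) :
    mstar (single i j 1) = ∑ k, (single i k 1 * ρ⁻¹) ⊗ₜ[ℂ] single k j 1 :=
  eq_of_forall_pair1_eq hρ hdet fun x y => by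
    rw [← hmstar, map_sum, sum_pair1_single_mul_inv_tmul_single hdet]

theorem sum_krausMap_single_mul_mul_krausMap_single {m : ℕ} {V : Fin m → Matrix (Fin n) (Fin n) ℂ}
    {P : Matrix (Fin n) (Fin n) ℂ} {c : ℂ}
    (horth : ∀ r q, (P * (V r)ᴴ * V q).trace = if r = q then c else 0) (i j : Fin n) :
    ∑ k, krausMap V (single i k 1 * P) * krausMap V (single k j 1) =
      c • krausMap V (single i j 1) := by
  have hsingle : ∀ t : ℂ, single i j t = t • single i j 1 := by simp
  have hterm : ∀ r q, ∑ k, V r * (single i k 1 * P) * (V r)ᴴ * (V q * single k j 1 * (V q)ᴴ) =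
      (if r = q then c else 0) • (V r * single i j 1 * (V q)ᴴ) := by
    intro r q
    have hexpand : ∀ k, V r * (single i k 1 * P) * (V r)ᴴ * (V q * single k j 1 * (V q)ᴴ) =
        V r * (single i k 1 * (P * (V r)ᴴ * V q) * single k j 1) * (V q)ᴴ := by
      intro k; simp only [mul_assoc]
    simp_rw [hexpand, ← Finset.sum_mul, ← Finset.mul_sum, sum_single_mul_mul_single, horth]
    rw [hsingle, mul_smul_comm, smul_mul_assoc]
  simp only [krausMap, LinearMap.coe_mk, AddHom.coe_mk, Finset.sum_mul_sum]
  rw [Finset.sum_comm]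
  simp_rw [Finset.sum_comm (γ := Fin n), hterm, ite_smul, zero_smul, Finset.sum_ite_eq,
    Finset.mem_univ, if_true, Finset.smul_sum]

end

theorem stmt2_general {n m : ℕ} (ρ : Matrix (Fin n) (Fin n) ℂ) (hρ : ρ.PosDef)
    (δ : ℝ)
    (V : Fin m → Matrix (Fin n) (Fin n) ℂ)
    (horth : ∀ r q, (ρ⁻¹ * (V r)ᴴ * V q).trace = if r = q then (δ ^ 2 : ℂ) else 0)
    (mstar : Matrix (Fin n) (Fin n) ℂ →ₗ[ℂ]
      Matrix (Fin n) (Fin n) ℂ ⊗[ℂ] Matrix (Fin n) (Fin n) ℂ)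
    (hmstar : ∀ x y z : Matrix (Fin n) (Fin n) ℂ,
      psi1 ρ (star (x * y) * z) = pair1 ρ x y (mstar z)) :
    ∀ z : Matrix (Fin n) (Fin n) ℂ,
      LinearMap.mul' ℂ (Matrix (Fin n) (Fin n) ℂ)
          (TensorProduct.map (krausMap V) (krausMap V) (mstar z)) =
        (δ ^ 2 : ℂ) • krausMap V z := by
  have hdet : IsUnit ρ.det := isUnit_iff_ne_zero.mpr hρ.det_pos.ne'
  suffices LinearMap.mul' ℂ _ ∘ₗ TensorProduct.map (krausMap V) (krausMap V) ∘ₗ mstar =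
      (δ ^ 2 : ℂ) • krausMap V from LinearMap.congr_fun this
  refine ext_linearMap ℂ fun i j => LinearMap.ext_ring ?_
  simp [mstar_single hρ.1 hdet hmstar, sum_krausMap_single_mul_mul_krausMap_single horth]

/-- if `V_1,…,V_m ∈ M_n` satisfy `Tr(ρ⁻¹ V_r* V_q) = δ² δ_{rq}` where `ρ` is
positive invertible with `Tr(ρ⁻¹) = δ²` (so `ψ = Tr(ρ ·)` is a `δ`-form), then the
completely positive map `A(x) = Σ_r V_r x V_r*` satisfies `m(A⊗A)m* = δ² A`, i.e. `A` is a
quantum adjacency operator. Here `mstar` is the adjoint of the multiplication map with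
respect to the GNS inner products. -/
theorem stmt2 {n m : ℕ} (ρ : Matrix (Fin n) (Fin n) ℂ) (hρ : ρ.PosDef)
    (δ : ℝ) (hδ : 0 < δ) (hform : (ρ⁻¹).trace = (δ ^ 2 : ℂ))
    (V : Fin m → Matrix (Fin n) (Fin n) ℂ)
    (horth : ∀ r q, (ρ⁻¹ * (V r)ᴴ * V q).trace = if r = q then (δ ^ 2 : ℂ) else 0)
    (mstar : Matrix (Fin n) (Fin n) ℂ →ₗ[ℂ]
      Matrix (Fin n) (Fin n) ℂ ⊗[ℂ] Matrix (Fin n) (Fin n) ℂ)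
    (hmstar : ∀ x y z : Matrix (Fin n) (Fin n) ℂ,
      psi1 ρ (star (x * y) * z) = pair1 ρ x y (mstar z)) :
    ∀ z : Matrix (Fin n) (Fin n) ℂ,
      LinearMap.mul' ℂ (Matrix (Fin n) (Fin n) ℂ)
          (TensorProduct.map (krausMap V) (krausMap V) (mstar z)) =
        (δ ^ 2 : ℂ) • krausMap V z :=
  stmt2_general ρ hρ δ V horth mstar hmstar
end

section
/- Let (B, A, ψ) be a quantum graph with B = ⊕_{a=1}^d M_{n_a} and ψ = ⊕_a Tr(ρ_a ·) a δ-form with each ρ_a diagonal. For fixed b, write A(f_{ij}^b) = ⊕_{a=1}^d X_{ij}^{ab} with X_{ij}^{ab} ∈ M_{n_a}, and set X^{ab} = [X_{ij}^{ab}]_{1≤i,j≤n_b} ∈ M_{n_b}(M_{n_a}). Then (1/δ²) X^{ab} is a self-adjoint idempotent (projection) in M_{n_b}(B): namely X_{ij}^{ab} = (X_{ji}^{ab})* and δ² X_{ij}^{ab} = Σ_{k=1}^{n_b} X_{ik}^{ab} X_{kj}^{ab}. -/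
open scoped TensorProduct ComplexOrder
open Matrix

/-- The multimatrix algebra `B = ⊕_{a=1}^d M_{n_a}` over `ℂ`. -/
abbrev MB (d : ℕ) (n : Fin d → ℕ) := ∀ a : Fin d, Matrix (Fin (n a)) (Fin (n a)) ℂ

/-- The state `ψ = ⊕_a Tr(ρ_a ·)` as a linear functional. -/
noncomputable def psiL {d : ℕ} {n : Fin d → ℕ} (ρ : MB d n) : MB d n →ₗ[ℂ] ℂ where
  toFun X := ∑ a, (ρ a * X a).trace
  map_add' x y := by simp [mul_add, Finset.sum_add_distrib]
  map_smul' c x := by simp [Finset.mul_sum, mul_smul_comm]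

/-- The GNS inner product on `B ⊗ B` paired against the pure tensor `x ⊗ y` in the first
(conjugated) slot. -/
noncomputable def pairL {d : ℕ} {n : Fin d → ℕ} (ρ : MB d n) (x y : MB d n) :
    (MB d n ⊗[ℂ] MB d n) →ₗ[ℂ] ℂ :=
  TensorProduct.lift
    (LinearMap.mk₂ ℂ (fun c e => psiL ρ (star x * c) * psiL ρ (star y * e))
      (fun c c' e => by simp [mul_add, map_add, add_mul])
      (fun s c e => by simp [mul_smul_comm, _root_.map_smul, smul_eq_mul]; ring)
      (fun c e e' => by simp [mul_add, map_add])
      (fun s c e => by simp [mul_smul_comm, _root_.map_smul, smul_eq_mul]; ring))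

/-- The normalized matrix units `f_{ij}^b = e_{ij}^b/(ψ(e_ii^b)^{1/2} ψ(e_jj^b)^{1/2})`
of the `b`-th block, where `ρ_b = diag(c b ·)`. -/
noncomputable def fB {d : ℕ} {n : Fin d → ℕ} (c : ∀ a, Fin (n a) → ℝ)
    (b : Fin d) (i j : Fin (n b)) : MB d n :=
  Pi.single b (((1 / (Real.sqrt (c b i) * Real.sqrt (c b j)) : ℝ) : ℂ) •
    single i j 1)

/-!
Pairing against pure tensors, `⟨x ⊗ y, t⟩ = ψ(x* t₁) ψ(y* t₂)`, is nondegenerate on `B ⊗ B`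
because `ρ` is diagonal with positive entries, so `m*` is determined by
`⟨x ⊗ y, m* z⟩ = ψ((xy)* z)`. With the normalisation of `f_{ij}` one has
`ψ(z* f_{ij}) = (√c_j / √c_i) · conj z_{ij}`, and the weights telescope:
`ψ((xy)* f_{ij}) = Σ_k ψ(x* f_{ik}) ψ(y* f_{kj})`, whence `m*(f_{ij}) = Σ_k f_{ik} ⊗ f_{kj}`.
Evaluating `m(A ⊗ A)m* = δ² A` at `f_{ij}` and reading off block `a` gives the idempotency
relation, and `f_{ij}* = f_{ji}` with `A` being `*`-preserving gives self-adjointness.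
-/

namespace MB

variable {d : ℕ} {n : Fin d → ℕ}

noncomputable def stdBasis (d : ℕ) (n : Fin d → ℕ) :
    Module.Basis (Σ a : Fin d, Fin (n a) × Fin (n a)) ℂ (MB d n) :=
  Pi.basis fun a => Matrix.stdBasis ℂ (Fin (n a)) (Fin (n a))

lemma stdBasis_apply (σ : Σ a : Fin d, Fin (n a) × Fin (n a)) :
    stdBasis d n σ = Pi.single σ.1 (single σ.2.1 σ.2.2 1) := by
  obtain ⟨a, p, q⟩ := σ
  simp [stdBasis, Matrix.stdBasis_eq_single]

lemma stdBasis_repr_apply (x : MB d n) (σ : Σ a : Fin d, Fin (n a) × Fin (n a)) :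
    (stdBasis d n).repr x σ = x σ.1 σ.2.1 σ.2.2 :=
  rfl

end MB

section
variable {d : ℕ} {n : Fin d → ℕ} {c : ∀ a, Fin (n a) → ℝ} {ρ : MB d n}

lemma psiL_apply_of_diagonal (hρ : ∀ a, ρ a = diagonal (fun k => (c a k : ℂ))) (x : MB d n) :
    psiL ρ x = ∑ a, ∑ k, (c a k : ℂ) * x a k k := by
  simp [psiL, hρ, Matrix.trace, Matrix.diagonal_mul]

lemma psiL_star (hρ : ∀ a, ρ a = diagonal (fun k => (c a k : ℂ))) (x : MB d n) :
    psiL ρ (star x) = starRingEnd ℂ (psiL ρ x) := by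
  simp [psiL_apply_of_diagonal hρ]

lemma star_single_one {m : Type*} [DecidableEq m] (p q : m) : star (single p q (1 : ℂ)) = single q p 1 := by
  simp [star_eq_conjTranspose]

lemma psiL_star_single_mul (hρ : ∀ a, ρ a = diagonal (fun k => (c a k : ℂ)))
    (a : Fin d) (p q : Fin (n a)) (u : MB d n) :
    psiL ρ (star (Pi.single a (single p q 1)) * u) = c a q * u a p q := by
  rw [psiL_apply_of_diagonal hρ, Finset.sum_eq_single a, Finset.sum_eq_single q]
  · simp [star_single_one]
  · intro k _ hk
    simp [star_single_one, single_mul_apply_of_ne (h := hk)]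
  · simp
  · intro a' _ ha'
    simp [Pi.single_eq_of_ne ha']
  · simp

lemma fB_eq_smul (c : ∀ a, Fin (n a) → ℝ) (b : Fin d) (i j : Fin (n b)) :
    fB c b i j = ((1 / (√(c b i) * √(c b j)) : ℝ) : ℂ) • Pi.single b (single i j 1) := by
  rw [fB, ← Pi.single_smul]

lemma star_fB (c : ∀ a, Fin (n a) → ℝ) (b : Fin d) (i j : Fin (n b)) :
    star (fB c b i j) = fB c b j i := by
  rw [fB_eq_smul, fB_eq_smul, star_smul, ← Pi.single_star, star_single_one, mul_comm]
  simp

lemma psiL_star_mul_fB (hρ : ∀ a, ρ a = diagonal (fun k => (c a k : ℂ)))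
    (z : MB d n) (b : Fin d) (i j : Fin (n b)) :
    psiL ρ (star z * fB c b i j) = ((√(c b j) / √(c b i) : ℝ) : ℂ) * starRingEnd ℂ (z b i j) := by
  have hψ : psiL ρ (star z * Pi.single b (single i j 1)) = c b j * starRingEnd ℂ (z b i j) := by
    rw [← star_star (Pi.single b _), ← star_mul, psiL_star hρ, psiL_star_single_mul hρ]
    simp
  have hscalar : 1 / (√(c b i) * √(c b j)) * c b j = √(c b j) / √(c b i) := by
    rw [one_div_mul_eq_div, mul_comm, ← div_div, Real.div_sqrt]
  rw [fB_eq_smul, mul_smul_comm, map_smul, hψ, smul_eq_mul, ← mul_assoc, ← Complex.ofReal_mul,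
    hscalar]

lemma psiL_star_mul_mul_fB (hc : ∀ a k, 0 < c a k)
    (hρ : ∀ a, ρ a = diagonal (fun k => (c a k : ℂ)))
    (x y : MB d n) (b : Fin d) (i j : Fin (n b)) :
    psiL ρ (star (x * y) * fB c b i j) =
      ∑ k, psiL ρ (star x * fB c b i k) * psiL ρ (star y * fB c b k j) := by
  simp only [psiL_star_mul_fB hρ, Pi.mul_apply, mul_apply, map_sum, map_mul, Finset.mul_sum]
  refine Finset.sum_congr rfl fun k _ => ?_
  have hk : √(c b k) ≠ 0 := (Real.sqrt_pos.2 (hc b k)).ne'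
  have htelescope : √(c b j) / √(c b i) = √(c b k) / √(c b i) * (√(c b j) / √(c b k)) := by
    field_simp
  rw [htelescope]
  push_cast
  ring

lemma pairL_tmul (x y u v : MB d n) :
    pairL ρ x y (u ⊗ₜ v) = psiL ρ (star x * u) * psiL ρ (star y * v) := by
  simp [pairL]

lemma pairL_stdBasis (hρ : ∀ a, ρ a = diagonal (fun k => (c a k : ℂ)))
    (σ τ : Σ a : Fin d, Fin (n a) × Fin (n a)) (t : MB d n ⊗[ℂ] MB d n) :
    pairL ρ (MB.stdBasis d n σ) (MB.stdBasis d n τ) t =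
      (c σ.1 σ.2.2 * c τ.1 τ.2.2 : ℂ) *
        ((MB.stdBasis d n).tensorProduct (MB.stdBasis d n)).repr t (σ, τ) := by
  induction t using TensorProduct.induction_on with
  | zero => simp
  | tmul u v =>
    simp only [pairL_tmul, MB.stdBasis_apply, psiL_star_single_mul hρ,
      Module.Basis.tensorProduct_repr_tmul_apply, MB.stdBasis_repr_apply, smul_eq_mul]
    ring
  | add t t' ht ht' => simp [ht, ht', mul_add]

lemma eq_zero_of_forall_pairL_eq_zero (hc : ∀ a k, 0 < c a k)
    (hρ : ∀ a, ρ a = diagonal (fun k => (c a k : ℂ)))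
    {t : MB d n ⊗[ℂ] MB d n} (h : ∀ x y, pairL ρ x y t = 0) : t = 0 := by
  refine ((MB.stdBasis d n).tensorProduct (MB.stdBasis d n)).ext_elem fun ⟨σ, τ⟩ => ?_
  have hpos : (c σ.1 σ.2.2 * c τ.1 τ.2.2 : ℂ) ≠ 0 := by
    exact_mod_cast (mul_pos (hc _ _) (hc _ _)).ne'
  have := h (MB.stdBasis d n σ) (MB.stdBasis d n τ)
  rw [pairL_stdBasis hρ] at this
  simpa [hpos] using this

lemma mstar_fB (hc : ∀ a k, 0 < c a k) (hρ : ∀ a, ρ a = diagonal (fun k => (c a k : ℂ)))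
    {mstar : MB d n →ₗ[ℂ] MB d n ⊗[ℂ] MB d n}
    (hmstar : ∀ x y z : MB d n, psiL ρ (star (x * y) * z) = pairL ρ x y (mstar z))
    (b : Fin d) (i j : Fin (n b)) :
    mstar (fB c b i j) = ∑ k, fB c b i k ⊗ₜ fB c b k j := by
  refine sub_eq_zero.1 (eq_zero_of_forall_pairL_eq_zero hc hρ fun x y => ?_)
  rw [map_sub, map_sum, ← hmstar, psiL_star_mul_mul_fB hc hρ]
  simp [pairL_tmul]

end

theorem stmt4_general {d : ℕ} {n : Fin d → ℕ} (c : ∀ a, Fin (n a) → ℝ)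
    (hc : ∀ a k, 0 < c a k)
    (ρ : MB d n) (hρ : ∀ a, ρ a = Matrix.diagonal (fun k => (c a k : ℂ)))
    (δ : ℝ)
    (mstar : MB d n →ₗ[ℂ] MB d n ⊗[ℂ] MB d n)
    (hmstar : ∀ x y z : MB d n,
      psiL ρ (star (x * y) * z) = pairL ρ x y (mstar z))
    (A : MB d n →ₗ[ℂ] MB d n)
    (hAstar : ∀ x, A (star x) = star (A x))
    (hSchur : ∀ z : MB d n,
      LinearMap.mul' ℂ (MB d n) (TensorProduct.map A A (mstar z)) = (δ ^ 2 : ℂ) • A z) :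
    ∀ (b : Fin d) (i j : Fin (n b)) (a : Fin d),
      (A (fB c b i j)) a = ((A (fB c b j i)) a)ᴴ ∧
      (δ ^ 2 : ℂ) • (A (fB c b i j)) a =
        ∑ k, (A (fB c b i k)) a * (A (fB c b k j)) a := by
  intro b i j a
  constructor
  · rw [← star_fB, hAstar, Pi.star_apply, star_eq_conjTranspose]
  · have hblock := congrFun (hSchur (fB c b i j)) a
    rw [mstar_fB hc hρ hmstar] at hblock
    simp only [map_sum, TensorProduct.map_tmul, LinearMap.mul'_apply, Finset.sum_apply,
      Pi.mul_apply, Pi.smul_apply] at hblock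
    exact hblock.symm

/-- let `(B, A, ψ)` be a quantum graph with `B = ⊕_a M_{n_a}` and
`ψ = ⊕_a Tr(ρ_a ·)` a `δ`-form with each `ρ_a` diagonal.  Writing
`A(f_{ij}^b) = ⊕_a X_{ij}^{ab}`, the matrix `(1/δ²) X^{ab} = [(1/δ²) X_{ij}^{ab}]_{ij}` is a
self-adjoint idempotent in `M_{n_b}(B)`: namely `X_{ij}^{ab} = (X_{ji}^{ab})*` and
`δ² X_{ij}^{ab} = Σ_k X_{ik}^{ab} X_{kj}^{ab}`. -/
theorem stmt4 {d : ℕ} {n : Fin d → ℕ} (c : ∀ a, Fin (n a) → ℝ)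
    (hc : ∀ a k, 0 < c a k)
    (ρ : MB d n) (hρ : ∀ a, ρ a = Matrix.diagonal (fun k => (c a k : ℂ)))
    (δ : ℝ) (hδ : 0 < δ)
    (mstar : MB d n →ₗ[ℂ] MB d n ⊗[ℂ] MB d n)
    (hmstar : ∀ x y z : MB d n,
      psiL ρ (star (x * y) * z) = pairL ρ x y (mstar z))
    (hform : ∀ z : MB d n, LinearMap.mul' ℂ (MB d n) (mstar z) = (δ ^ 2 : ℂ) • z)
    (A : MB d n →ₗ[ℂ] MB d n)
    (hAstar : ∀ x, A (star x) = star (A x))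
    (hSchur : ∀ z : MB d n,
      LinearMap.mul' ℂ (MB d n) (TensorProduct.map A A (mstar z)) = (δ ^ 2 : ℂ) • A z) :
    ∀ (b : Fin d) (i j : Fin (n b)) (a : Fin d),
      (A (fB c b i j)) a = ((A (fB c b j i)) a)ᴴ ∧
      (δ ^ 2 : ℂ) • (A (fB c b i j)) a =
        ∑ k, (A (fB c b i k)) a * (A (fB c b k j)) a :=
  stmt4_general c hc ρ hρ δ mstar hmstar A hAstar hSchur
end

section
/- Let ρ ∈ M_n be a positive invertible diagonal matrix and let V_1,…,V_m ∈ M_n satisfy Tr(ρ^{-1}V_r*V_q) = δ² δ_{rq}. In the C*-correspondence M_n ⊗_ψ M_n (inner product ⟨a⊗b, c⊗d⟩ = ψ(a*c) b*d, with ψ = Tr(ρ·)), define ψ_{ar} := Σ_{j=1}^n e_{aj}ρ^{-1} ⊗ V_r e_{j1} for 1 ≤ a ≤ n and 1 ≤ r ≤ m. Then ⟨ψ_{a₁r₁}, ψ_{a₂r₂}⟩ = δ² δ_{a₁a₂} δ_{r₁r₂} e_{11}. In particular the elements φ_{ar} = (1/δ)ψ_{ar} satisfy ⟨φ_{ar},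 φ_{ar}⟩ = e_{11}, a projection. -/
/-!
With `ρ = diag c`, the left factors give `ψ((e_{a₁j} ρ⁻¹)* e_{a₂k} ρ⁻¹) = δ_{a₁a₂} δ_{jk} c_j⁻¹`
(the `c_j` being real), while the right factors give `(V e_{j1})* (W e_{k1}) = (V*W)_{jk} e_{11}`.
Hence the double sum collapses to `δ_{a₁a₂} Tr(ρ⁻¹ V* W) e_{11}`, and the orthogonality of the `V_r`
finishes the computation; the second claim follows by pulling out the real scalar `1/δ` twice.
-/

open scoped TensorProduct ComplexOrder
open Matrix

namespace Matrix

section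

variable {ι α : Type*} [Fintype ι] [DecidableEq ι]

theorem single_mul_diagonal [NonUnitalNonAssocSemiring α] (i j : ι) (a : α) (d : ι → α) :
    single i j a * diagonal d = single i j (a * d j) := by
  ext k l
  by_cases hk : i = k <;> by_cases hl : j = l <;> simp [single, mul_diagonal, hk, hl]

theorem diagonal_mul_single [NonUnitalNonAssocSemiring α] (d : ι → α) (i j : ι) (a : α) :
    diagonal d * single i j a = single i j (d i * a) := by
  ext k l
  by_cases hk : i = k <;> by_cases hl : j = l <;> simp [single, diagonal_mul, hk, hl]

theorem trace_diagonal_mul [NonUnitalNonAssocSemiring α] (d : ι → α) (M : Matrix ι ι α) :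
    (diagonal d * M).trace = ∑ i, d i * M i i := by
  simp [trace, diagonal_mul]

theorem inv_diagonal_of_ne_zero {K : Type*} [Field K] {d : ι → K} (hd : ∀ i, d i ≠ 0) :
    (diagonal d)⁻¹ = diagonal d⁻¹ := by
  refine inv_eq_right_inv ?_
  rw [diagonal_mul_diagonal, ← diagonal_one]
  congr 1
  ext i
  exact mul_inv_cancel₀ (hd i)

theorem conjTranspose_mul_single_mul_mul_single [Semiring α] [StarRing α]
    (A B : Matrix ι ι α) (i j k : ι) :
    (A * single j i 1)ᴴ * (B * single k i 1) = single i i ((Aᴴ * B) j k) := by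
  rw [conjTranspose_mul, conjTranspose_single, star_one, Matrix.mul_assoc, ← Matrix.mul_assoc Aᴴ,
    ← Matrix.mul_assoc, single_mul_mul_single, one_mul, mul_one]

end

end Matrix

section

variable {n : ℕ} {c : Fin n → ℝ}

theorem psi1_apply (ρ X : Matrix (Fin n) (Fin n) ℂ) : psi1 ρ X = (ρ * X).trace := rfl

theorem psi1_conjTranspose_smul_mul_smul (ρ A B : Matrix (Fin n) (Fin n) ℂ) (t s : ℂ) :
    psi1 ρ ((t • A)ᴴ * (s • B)) = star t * s * psi1 ρ (Aᴴ * B) := by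
  rw [conjTranspose_smul, smul_mul_smul_comm, map_smul, smul_eq_mul]

theorem psi1_conjTranspose_single_mul_inv_mul (hc : ∀ i, c i ≠ 0) (a₁ a₂ j k : Fin n) :
    psi1 (diagonal fun i => (c i : ℂ))
        ((single a₁ j 1 * (diagonal fun i => (c i : ℂ))⁻¹)ᴴ *
          (single a₂ k 1 * (diagonal fun i => (c i : ℂ))⁻¹)) =
      if a₁ = a₂ ∧ j = k then (c j : ℂ)⁻¹ else 0 := by
  have hc' : ∀ i, (c i : ℂ) ≠ 0 := fun i => Complex.ofReal_ne_zero.2 (hc i)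
  rw [inv_diagonal_of_ne_zero hc', single_mul_diagonal, single_mul_diagonal, conjTranspose_single,
    psi1_apply]
  by_cases ha : a₁ = a₂
  · subst ha
    rw [single_mul_single_same, diagonal_mul_single]
    by_cases hjk : j = k
    · subst hjk
      simp [hc' j]
    · simp [hjk]
  · simp [ha]

theorem sum_psi1_smul_conjTranspose_mul (hc : ∀ i, c i ≠ 0) (z a₁ a₂ : Fin n)
    (A B : Matrix (Fin n) (Fin n) ℂ) :
    ∑ j, ∑ k, psi1 (diagonal fun i => (c i : ℂ))
        ((single a₁ j 1 * (diagonal fun i => (c i : ℂ))⁻¹)ᴴ *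
          (single a₂ k 1 * (diagonal fun i => (c i : ℂ))⁻¹)) •
        ((A * single j z 1)ᴴ * (B * single k z 1)) =
      if a₁ = a₂ then single z z (((diagonal fun i => (c i : ℂ))⁻¹ * Aᴴ * B).trace) else 0 := by
  simp only [psi1_conjTranspose_single_mul_inv_mul hc, conjTranspose_mul_single_mul_mul_single]
  split_ifs with ha
  · subst ha
    simp only [true_and, ite_smul, zero_smul, Finset.sum_ite_eq, Finset.mem_univ, if_true,
      smul_single, smul_eq_mul]
    rw [Matrix.mul_assoc, inv_diagonal_of_ne_zero (by exact_mod_cast hc), trace_diagonal_mul]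
    exact (map_sum (singleAddMonoidHom z z : ℂ →+ Matrix (Fin n) (Fin n) ℂ) _ _).symm
  · simp [ha]

end

/-- let `ρ ∈ M_n` be positive invertible diagonal and `V_1,…,V_m ∈ M_n` with
`Tr(ρ⁻¹ V_r* V_q) = δ² δ_{rq}`.  In `M_n ⊗_ψ M_n` with inner product
`⟨a⊗b, c⊗d⟩ = ψ(a*c) b*d` (`ψ = Tr(ρ·)`), set `ψ_{ar} = Σ_j e_{aj}ρ⁻¹ ⊗ V_r e_{j1}`.  Then
`⟨ψ_{a₁r₁}, ψ_{a₂r₂}⟩ = δ² δ_{a₁a₂} δ_{r₁r₂} e_{11}`; here the inner product of the two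
sums of pure tensors is written out sesquilinearly as a double sum.  In particular
`φ_{ar} = (1/δ)ψ_{ar}` satisfies `⟨φ_{ar}, φ_{ar}⟩ = e_{11}`, a projection. -/
theorem stmt12 {n m : ℕ} (hn : 0 < n) (c : Fin n → ℝ) (hc : ∀ i, 0 < c i)
    (ρ : Matrix (Fin n) (Fin n) ℂ) (hρ : ρ = Matrix.diagonal (fun i => (c i : ℂ)))
    (δ : ℝ) (hδ : 0 < δ)
    (V : Fin m → Matrix (Fin n) (Fin n) ℂ)
    (horth : ∀ r q, (ρ⁻¹ * (V r)ᴴ * V q).trace = if r = q then (δ ^ 2 : ℂ) else 0) :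
    (∀ (a₁ a₂ : Fin n) (r₁ r₂ : Fin m),
      (∑ j, ∑ k,
        psi1 ρ ((single a₁ j (1 : ℂ) * ρ⁻¹)ᴴ * (single a₂ k (1 : ℂ) * ρ⁻¹)) •
          ((V r₁ * single j (⟨0, hn⟩ : Fin n) (1 : ℂ))ᴴ *
            (V r₂ * single k (⟨0, hn⟩ : Fin n) (1 : ℂ)))) =
        (δ ^ 2 : ℂ) • (if a₁ = a₂ ∧ r₁ = r₂ then
          single (⟨0, hn⟩ : Fin n) (⟨0, hn⟩ : Fin n) (1 : ℂ) else 0)) ∧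
    (∀ (a : Fin n) (r : Fin m),
      (∑ j, ∑ k,
        psi1 ρ (((1 / (δ : ℂ)) • (single a j (1 : ℂ) * ρ⁻¹))ᴴ *
            ((1 / (δ : ℂ)) • (single a k (1 : ℂ) * ρ⁻¹))) •
          ((V r * single j (⟨0, hn⟩ : Fin n) (1 : ℂ))ᴴ *
            (V r * single k (⟨0, hn⟩ : Fin n) (1 : ℂ)))) =
        single (⟨0, hn⟩ : Fin n) (⟨0, hn⟩ : Fin n) (1 : ℂ)) := by
  subst hρ
  have hc0 : ∀ i, c i ≠ 0 := fun i => (hc i).ne'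
  refine ⟨fun a₁ a₂ r₁ r₂ => ?_, fun a r => ?_⟩
  · rw [sum_psi1_smul_conjTranspose_mul hc0, horth]
    by_cases ha : a₁ = a₂ <;> by_cases hr : r₁ = r₂ <;> simp [ha, hr, smul_single]
  · simp only [psi1_conjTranspose_smul_mul_smul, mul_smul, ← Finset.smul_sum]
    rw [sum_psi1_smul_conjTranspose_mul hc0, if_pos rfl, horth, if_pos rfl, smul_single,
      smul_single]
    have hδ' : (δ : ℂ) ≠ 0 := Complex.ofReal_ne_zero.2 hδ.ne'
    congr 1
    simp only [one_div, star_inv₀, Complex.star_def, Complex.conj_ofReal, smul_eq_mul]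
    field_simp
end

section
/- For t ∈ (0,1) with t ≠ 1/2, consider the equation 2 + (t/(1-t))^β + ((1-t)/t)^β = e^β in β > 0. If max(t/(1-t), (1-t)/t) ≥ e, then there is no solution β > 0 (the left-hand side strictly exceeds the right-hand side for all β > 0). If both t/(1-t) < e and (1-t)/t < e, then there exists a solution β > 0. -/
open Real Filter

/-- for `t ∈ (0,1)` with `t ≠ 1/2`, consider the equation
`2 + (t/(1-t))^β + ((1-t)/t)^β = e^β` in `β > 0`.  If `max(t/(1-t), (1-t)/t) ≥ e` then
there is no solution (the left-hand side strictly exceeds the right-hand side for all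
`β > 0`); if both ratios are `< e` then a solution `β > 0` exists. -/
theorem stmt16 (t : ℝ) (ht0 : 0 < t) (ht1 : t < 1) (hth : t ≠ 1 / 2) :
    (Real.exp 1 ≤ max (t / (1 - t)) ((1 - t) / t) →
      ∀ β : ℝ, 0 < β →
        Real.exp β < 2 + (t / (1 - t)) ^ β + ((1 - t) / t) ^ β) ∧
    (t / (1 - t) < Real.exp 1 → (1 - t) / t < Real.exp 1 →
      ∃ β : ℝ, 0 < β ∧
        2 + (t / (1 - t)) ^ β + ((1 - t) / t) ^ β = Real.exp β) := by
  set a := t / (1 - t) with ha_def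
  set b := (1 - t) / t with hb_def
  have h1t : 0 < 1 - t := by linarith
  have ha : 0 < a := div_pos ht0 h1t
  have hb : 0 < b := div_pos h1t ht0
  constructor
  · intro hM β hβ
    have h1 : Real.exp β = (Real.exp 1) ^ β := (Real.exp_one_rpow β).symm
    have h2 : (Real.exp 1) ^ β ≤ (max a b) ^ β :=
      Real.rpow_le_rpow (Real.exp_pos 1).le hM hβ.le
    have h3 : (max a b) ^ β ≤ a ^ β + b ^ β := by
      rcases max_choice a b with h | h <;> rw [h]
      · nlinarith [Real.rpow_nonneg hb.le β]
      · nlinarith [Real.rpow_nonneg ha.le β]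
    linarith
  · intro hae hbe
    have la1 : Real.log a < 1 := by
      calc Real.log a < Real.log (Real.exp 1) := Real.log_lt_log ha hae
      _ = 1 := Real.log_exp 1
    have lb1 : Real.log b < 1 := by
      calc Real.log b < Real.log (Real.exp 1) := Real.log_lt_log hb hbe
      _ = 1 := Real.log_exp 1
    set f : ℝ → ℝ := fun β => 2 + a ^ β + b ^ β - Real.exp β with hf
    have hfeq : ∀ β, f β = 2 + Real.exp (Real.log a * β) + Real.exp (Real.log b * β)
        - Real.exp β := by
      intro β
      simp only [hf, Real.rpow_def_of_pos ha, Real.rpow_def_of_pos hb]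
    have hcont : Continuous f := by
      have : Continuous fun β : ℝ => 2 + Real.exp (Real.log a * β)
          + Real.exp (Real.log b * β) - Real.exp β := by fun_prop
      exact this.congr fun β => (hfeq β).symm
    -- quotient tends to -1
    have hterm : ∀ c : ℝ, c < 0 → Tendsto (fun β : ℝ => Real.exp (c * β)) atTop (nhds 0) := by
      intro c hc
      exact Real.tendsto_exp_atBot.comp (tendsto_id.const_mul_atTop_of_neg hc)
    have hq : Tendsto (fun β => f β / Real.exp β) atTop (nhds (0 + 0 + 0 - 1)) := by
      have : ∀ β : ℝ, f β / Real.exp β =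
          2 * Real.exp ((-1) * β) + Real.exp ((Real.log a - 1) * β)
          + Real.exp ((Real.log b - 1) * β) - 1 := by
        intro β
        have e1 : Real.exp ((-1) * β) * Real.exp β = 1 := by
          rw [← Real.exp_add]; norm_num
        have e2 : Real.exp ((Real.log a - 1) * β) * Real.exp β = Real.exp (Real.log a * β) := by
          rw [← Real.exp_add]; ring_nf
        have e3 : Real.exp ((Real.log b - 1) * β) * Real.exp β = Real.exp (Real.log b * β) := by
          rw [← Real.exp_add]; ring_nf
        rw [hfeq β, div_eq_iff (Real.exp_ne_zero β), sub_mul, add_mul, add_mul, mul_assoc,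
          e1, e2, e3]
        ring
      rw [show (0:ℝ) + 0 + 0 - 1 = 2*0 + 0 + 0 - 1 by ring]
      refine Tendsto.congr (fun β => (this β).symm) ?_
      exact ((((hterm _ (by norm_num)).const_mul 2).add
        (hterm _ (by linarith))).add (hterm _ (by linarith))).sub tendsto_const_nhds
    have hev : ∀ᶠ β in atTop, f β / Real.exp β < 0 := by
      have : (0:ℝ) + 0 + 0 - 1 < 0 := by norm_num
      exact hq.eventually_lt_const this
    obtain ⟨B, hB0, hBneg⟩ := ((eventually_gt_atTop (0:ℝ)).and hev).exists
    have hfB : f B < 0 := by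
      have hE := Real.exp_pos B
      rcases div_neg_iff.mp hBneg with ⟨_, h⟩ | ⟨h, _⟩ <;> linarith
    have hf0 : f 0 = 3 := by
      simp [hf, Real.rpow_zero, Real.exp_zero]
      norm_num
    have hsub : Set.Icc (f B) (f 0) ⊆ f '' Set.Icc 0 B :=
      intermediate_value_Icc' hB0.le hcont.continuousOn
    obtain ⟨x, hx, hfx⟩ := hsub ⟨hfB.le, by rw [hf0]; norm_num⟩
    refine ⟨x, ?_, ?_⟩
    · rcases hx.1.lt_or_eq with h | h
      · exact h
      · exfalso; rw [← h] at hfx; rw [hf0] at hfx; norm_num at hfx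
    · have : f x = 0 := hfx
      simp only [hf] at this
      linarith
end
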